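/- For every linear [n,k,d] code over F_q, the length satisfies n ≥ Σ_{i=0}^{k-1} ⌈d/q^i⌉ (the Griesmer bound). -/

import Mathlib

/-!
Induction on the dimension via the residual code. Let `c` be a codeword of minimum weight
`w ≥ d` and delete the `w` coordinates of its support. Writing `y'` for `y` restricted to the
zeros of `c`, we have `∑_{α ∈ F} wt (y - α c) = (q - 1) w + q wt (y')`, so every codeword `y`
outside `F c` satisfies `w ≤ q wt (y')`. Hence the residual code `C.map (restrictZeros c)` has
dimension `k - 1` and minimum distance at least `⌈w / q⌉`, and
`g_q(k, w) = w + g_q(k - 1, ⌈w / q⌉)` closes the induction.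
-/

/-- Hamming weight of a vector. -/
noncomputable def wt {ι F : Type*} [Zero F] (c : ι → F) : ℕ :=
  Nat.card {i // c i ≠ 0}

/-- Griesmer sum `g_q(k,d) = ∑_{i<k} ⌈d / q^i⌉` (using `(d + q^i - 1)/q^i`). -/
def gbound (q k d : ℕ) : ℕ :=
  ∑ i ∈ Finset.range k, (d + q ^ i - 1) / q ^ i

open Finset

lemma Nat.ceilDiv_ceilDiv {a b : ℕ} (ha : 0 < a) (hb : 0 < b) (d : ℕ) :
    d ⌈/⌉ a ⌈/⌉ b = d ⌈/⌉ (a * b) :=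
  eq_of_forall_ge_iff fun c => by
    rw [ceilDiv_le_iff_le_mul hb, ceilDiv_le_iff_le_mul ha,
      ceilDiv_le_iff_le_mul (Nat.mul_pos ha hb), mul_assoc]

lemma gbound_eq_sum_ceilDiv (q k d : ℕ) : gbound q k d = ∑ i ∈ range k, d ⌈/⌉ q ^ i := rfl

lemma gbound_mono {q k : ℕ} : Monotone (gbound q k) := fun _ _ h =>
  sum_le_sum fun i _ => Nat.div_le_div_right (by omega)

lemma gbound_succ {q : ℕ} (hq : 0 < q) (k d : ℕ) :
    gbound q (k + 1) d = d + gbound q k (d ⌈/⌉ q) := by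
  simp only [gbound_eq_sum_ceilDiv, sum_range_succ', pow_zero, ceilDiv_one,
    Nat.ceilDiv_ceilDiv hq (pow_pos hq _), pow_succ']
  ring

open scoped Classical

section Coding

variable {F ι : Type*} [Field F]

def restrictZeros (c : ι → F) : (ι → F) →ₗ[F] ({i // c i = 0} → F) :=
  LinearMap.funLeft F F Subtype.val

lemma restrictZeros_self (c : ι → F) : restrictZeros c c = 0 :=
  funext fun i => i.2

variable [Fintype ι]

lemma wt_eq_card_filter (c : ι → F) : wt c = #{i | c i ≠ 0} := by
  rw [wt, Nat.card_eq_fintype_card, Fintype.card_subtype]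

lemma card_zeros_add_wt (c : ι → F) : Fintype.card {i // c i = 0} + wt c = Fintype.card ι := by
  rw [wt_eq_card_filter, Fintype.card_subtype]
  exact card_filter_add_card_filter_not _

lemma wt_restrictZeros (c y : ι → F) : wt (restrictZeros c y) = #{i | c i = 0 ∧ y i ≠ 0} := by
  rw [wt, ← Fintype.card_subtype, ← Nat.card_eq_fintype_card]
  exact Nat.card_congr (Equiv.subtypeSubtypeEquivSubtypeInter (c · = 0) (y · ≠ 0))

lemma wt_pos {c : ι → F} (hc : c ≠ 0) : 0 < wt c :=
  have ⟨i, hi⟩ := Function.ne_iff.mp hc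
  Nat.card_pos_iff.mpr ⟨⟨⟨i, hi⟩⟩, inferInstance⟩

lemma wt_zero : wt (0 : ι → F) = 0 := by
  simp [wt_eq_card_filter]

variable [Fintype F]

lemma card_filter_sub_mul_ne_zero (a b : F) :
    #{α : F | a - α * b ≠ 0} =
      (if b ≠ 0 then Fintype.card F - 1 else 0) +
        (if b = 0 ∧ a ≠ 0 then Fintype.card F else 0) := by
  by_cases hb : b = 0
  · by_cases ha : a = 0 <;> simp [hb, ha]
  · have : ∀ α : F, a - α * b ≠ 0 ↔ α ≠ a / b := fun α => by
      rw [sub_ne_zero, ne_comm, ne_eq, ← eq_div_iff hb]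
    simp [this, filter_ne', hb]

lemma sum_wt_sub_smul (y c : ι → F) :
    ∑ α : F, wt (y - α • c) =
      (Fintype.card F - 1) * wt c + Fintype.card F * wt (restrictZeros c y) := by
  calc ∑ α : F, wt (y - α • c) = ∑ i, #{α : F | y i - α * c i ≠ 0} := by
        simp only [wt_eq_card_filter, card_filter, Pi.sub_apply, Pi.smul_apply, smul_eq_mul]
        exact sum_comm
    _ = _ := by
        rw [wt_restrictZeros, wt_eq_card_filter]
        simp only [card_filter_sub_mul_ne_zero, sum_add_distrib, sum_ite, sum_const_zero,
          sum_const, smul_eq_mul, add_zero]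
        ring

lemma Submodule.exists_min_wt (C : Submodule F (ι → F)) (hC : C ≠ ⊥) :
    ∃ c ∈ C, c ≠ 0 ∧ ∀ x ∈ C, x ≠ 0 → wt c ≤ wt x := by
  obtain ⟨c, ⟨hc, hc0⟩, hmin⟩ := Set.exists_min_image {x | x ∈ C ∧ x ≠ 0} wt (Set.toFinite _)
    (Submodule.exists_mem_ne_zero_of_ne_bot hC)
  exact ⟨c, hc, hc0, fun x hx hx0 => hmin x ⟨hx, hx0⟩⟩

variable {C : Submodule F (ι → F)} {c : ι → F} (hc : c ∈ C)
  (hmin : ∀ x ∈ C, x ≠ 0 → wt c ≤ wt x)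
include hc hmin

lemma wt_le_card_mul_wt_restrictZeros {y : ι → F} (hy : y ∈ C) (hyc : y ∉ F ∙ c) :
    wt c ≤ Fintype.card F * wt (restrictZeros c y) := by
  have hterm : ∀ α : F, wt c ≤ wt (y - α • c) := fun α =>
    hmin _ (C.sub_mem hy (C.smul_mem α hc)) fun h =>
      hyc (Submodule.mem_span_singleton.mpr ⟨α, (sub_eq_zero.mp h).symm⟩)
  have hsum : Fintype.card F * wt c ≤ ∑ α : F, wt (y - α • c) := by
    simpa using sum_le_sum fun α (_ : α ∈ univ) => hterm α
  have hq : 0 < Fintype.card F := Fintype.card_pos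
  rw [sum_wt_sub_smul] at hsum
  have : Fintype.card F * wt c = (Fintype.card F - 1) * wt c + wt c := by
    rw [← Nat.succ_mul, Nat.succ_eq_add_one, Nat.sub_add_cancel hq]
  omega

lemma restrictZeros_eq_zero_iff (hc0 : c ≠ 0) {y : ι → F} (hy : y ∈ C) :
    restrictZeros c y = 0 ↔ y ∈ F ∙ c := by
  refine ⟨fun hy0 => ?_, fun hyc => ?_⟩
  · by_contra hyc
    have := wt_le_card_mul_wt_restrictZeros hc hmin hy hyc
    rw [hy0, wt_zero, mul_zero] at this
    exact (wt_pos hc0).ne' (Nat.le_zero.mp this)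
  · obtain ⟨α, rfl⟩ := Submodule.mem_span_singleton.mp hyc
    rw [map_smul, restrictZeros_self, smul_zero]

lemma finrank_map_restrictZeros_add_one (hc0 : c ≠ 0) :
    Module.finrank F (C.map (restrictZeros c)) + 1 = Module.finrank F C := by
  have hker : LinearMap.ker (restrictZeros c ∘ₗ C.subtype) = F ∙ (⟨c, hc⟩ : C) := by
    ext x
    rw [LinearMap.mem_ker, LinearMap.comp_apply, Submodule.subtype_apply,
      restrictZeros_eq_zero_iff hc hmin hc0 x.2, Submodule.mem_span_singleton,
      Submodule.mem_span_singleton]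
    simp [Subtype.ext_iff]
  have := LinearMap.finrank_range_add_finrank_ker (restrictZeros c ∘ₗ C.subtype)
  rwa [LinearMap.range_comp, Submodule.range_subtype, hker,
    finrank_span_singleton (by simpa using hc0)] at this

lemma ceilDiv_card_le_wt_of_mem_map {z : {i // c i = 0} → F}
    (hz : z ∈ C.map (restrictZeros c)) (hz0 : z ≠ 0) : wt c ⌈/⌉ Fintype.card F ≤ wt z := by
  obtain ⟨y, hy, rfl⟩ := hz
  rw [ceilDiv_le_iff_le_mul Fintype.card_pos]
  refine wt_le_card_mul_wt_restrictZeros hc hmin hy fun hyc => hz0 ?_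
  obtain ⟨α, rfl⟩ := Submodule.mem_span_singleton.mp hyc
  rw [map_smul, restrictZeros_self, smul_zero]

end Coding

theorem griesmer_bound {F ι : Type*} [Field F] [Fintype F] [Fintype ι] {k d : ℕ}
    (C : Submodule F (ι → F)) (hk : Module.finrank F C = k)
    (hd : ∀ x ∈ C, x ≠ 0 → d ≤ wt x) : gbound (Fintype.card F) k d ≤ Fintype.card ι := by
  induction k generalizing ι C d with
  | zero => simp [gbound]
  | succ k ih =>
    have hC : C ≠ ⊥ := fun h => by rw [h, finrank_bot] at hk; omega
    obtain ⟨c, hc, hc0, hmin⟩ := C.exists_min_wt hC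
    have hres := ih (C.map (restrictZeros c))
      (by have := finrank_map_restrictZeros_add_one hc hmin hc0; omega)
      fun z hz hz0 => ceilDiv_card_le_wt_of_mem_map hc hmin hz hz0
    calc gbound (Fintype.card F) (k + 1) d ≤ gbound (Fintype.card F) (k + 1) (wt c) :=
          gbound_mono (hd c hc hc0)
      _ = wt c + gbound (Fintype.card F) k (wt c ⌈/⌉ Fintype.card F) :=
          gbound_succ Fintype.card_pos k (wt c)
      _ ≤ wt c + Fintype.card {i // c i = 0} := Nat.add_le_add_left hres _
      _ = Fintype.card ι := by rw [add_comm, card_zeros_add_wt]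

theorem stmt1_general {F : Type*} [Field F] [Fintype F] {n k d : ℕ}
    (C : Submodule F (Fin n → F))
    (hk : Module.finrank F C = k)
    (hmin : ∀ c ∈ C, c ≠ 0 → d ≤ wt c) :
    gbound (Fintype.card F) k d ≤ n := by
  simpa using griesmer_bound C hk hmin

theorem stmt1 {F : Type*} [Field F] [Fintype F] {n k d : ℕ}
    (C : Submodule F (Fin n → F))
    (hk : Module.finrank F C = k)
    (hmin : ∀ c ∈ C, c ≠ 0 → d ≤ wt c)
    (hex : ∃ c ∈ C, c ≠ 0 ∧ wt c = d) :
    gbound (Fintype.card F) k d ≤ n :=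
  stmt1_general C hk hmin
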